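/- arXiv:0906.0549 — 3 statements merged into one kernel-verified Lean document; each statement's English description precedes it below -/
import Mathlib

section
/- Let h be a linear operator on a complex vector space and suppose ψ_{l,j}, for j = 0,...,k_l - 1, form a Jordan chain for h at eigenvalue E_l: h ψ_{l,0} = E_l ψ_{l,0} and (h - E_l) ψ_{l,j} = ψ_{l,j-1} for j ≥ 1. Let e be a linear operator commuting with h, and let ⟨·,·⟩ be a bilinear form such that ⟨e f, g⟩ = -⟨f, e g⟩ and ⟨h f, g⟩ = ⟨f, h g⟩ for all f, g in the chain's span and its images, with the normalization ⟨ψ_{l,j}, ψ_{l,k_l-1-j'}⟩ = δ_{jj'}. Assume the geometric multiplicity of E_l is 1 (every eigenvector of h with eigenvalue E_l is proportional to ψ_{l,0}). Then e ψ_{l,j} = 0 for all j = 0,...,k_l - 1. -/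
/-- A Jordan chain `ψ 0, ..., ψ (k-1)` of a linear operator `h` at eigenvalue `E`,
with an `h`-symmetric, `e`-antisymmetric bilinear pairing `B` normalized on the chain,
and geometric multiplicity one: then any operator `e` commuting with `h` annihilates
the whole chain. -/
theorem stmt_2 {V : Type*} [AddCommGroup V] [Module ℂ V]
    (h e : V →ₗ[ℂ] V) (hcomm : h ∘ₗ e = e ∘ₗ h)
    (E : ℂ) (k : ℕ) (hk : 0 < k) (ψ : ℕ → V)
    (hchain0 : h (ψ 0) = E • ψ 0)
    (hchain : ∀ j : ℕ, j + 1 < k → h (ψ (j + 1)) - E • ψ (j + 1) = ψ j)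
    (B : V →ₗ[ℂ] V →ₗ[ℂ] ℂ)
    (hBe : ∀ f g : V, B (e f) g = -B f (e g))
    (hBh : ∀ f g : V, B (h f) g = B f (h g))
    (hnorm : ∀ j j' : ℕ, j < k → j' < k →
      B (ψ j) (ψ (k - 1 - j')) = if j = j' then 1 else 0)
    (hgeom : ∀ v : V, h v = E • v → ∃ c : ℂ, v = c • ψ 0) :
    ∀ j : ℕ, j < k → e (ψ j) = 0 := by
  -- T = h - E • id
  set T : V →ₗ[ℂ] V := h - E • LinearMap.id with hTdef
  have hcomm' : ∀ v : V, h (e v) = e (h v) := by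
    intro v
    have := LinearMap.ext_iff.mp hcomm v
    simpa using this
  have hTe : ∀ v : V, T (e v) = e (T v) := by
    intro v
    simp [hTdef, LinearMap.sub_apply, LinearMap.smul_apply, hcomm', map_sub, map_smul]
  have hTepow : ∀ (m : ℕ) (v : V), (T ^ m) (e v) = e ((T ^ m) v) := by
    intro m
    induction m with
    | zero => intro v; simp
    | succ n IH =>
      intro v
      rw [pow_succ, Module.End.mul_apply, Module.End.mul_apply, hTe, IH]
  have hBT : ∀ f g : V, B (T f) g = B f (T g) := by
    intro f g
    simp [hTdef, LinearMap.sub_apply, LinearMap.smul_apply, map_sub, map_smul, hBh]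
  have hBTpow : ∀ (m : ℕ) (f g : V), B ((T ^ m) f) g = B f ((T ^ m) g) := by
    intro m
    induction m with
    | zero => intro f g; simp
    | succ n IH =>
      intro f g
      rw [pow_succ', Module.End.mul_apply, Module.End.mul_apply, hBT, IH,
        ← Module.End.mul_apply, ← pow_succ, pow_succ', Module.End.mul_apply]
  have hT0 : T (ψ 0) = 0 := by
    simp [hTdef, LinearMap.sub_apply, hchain0]
  have hTchain : ∀ j : ℕ, j + 1 < k → T (ψ (j + 1)) = ψ j := by
    intro j hj
    simp [hTdef, LinearMap.sub_apply, hchain j hj]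
  have hpow : ∀ (m j : ℕ), j + m < k → (T ^ m) (ψ (j + m)) = ψ j := by
    intro m
    induction m with
    | zero => intro j hj; simp
    | succ n IH =>
      intro j hj
      have h1 : j + (n + 1) = (j + n) + 1 := by ring
      rw [h1, pow_succ, Module.End.mul_apply]
      rw [hTchain (j + n) (by omega)]
      exact IH j (by omega)
  -- normalization facts
  have hB1 : B (ψ (k - 1)) (ψ 0) = 1 := by
    have := hnorm (k - 1) (k - 1) (by omega) (by omega)
    simpa using this
  have hB2 : B (ψ 0) (ψ (k - 1)) = 1 := by
    have := hnorm 0 0 (by omega) (by omega)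
    simpa using this
  intro j
  induction j using Nat.strong_induction_on with
  | _ j IH =>
    intro hj
    -- e (ψ j) is an eigenvector of h at E
    have heig : T (e (ψ j)) = 0 := by
      rw [hTe]
      cases j with
      | zero => rw [hT0, map_zero]
      | succ n =>
        simp [hTchain n hj, IH n (by omega) (by omega)]
    have heig' : h (e (ψ j)) = E • e (ψ j) := by
      have : h (e (ψ j)) - E • e (ψ j) = 0 := by
        simpa [hTdef, LinearMap.sub_apply, LinearMap.smul_apply] using heig
      linear_combination (norm := module) this
    obtain ⟨C, hC⟩ := hgeom (e (ψ j)) heig'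
    -- first computation: B (ψ (k-1)) (e (ψ j)) = C
    have hC1 : B (ψ (k - 1)) (e (ψ j)) = C := by
      rw [hC, map_smul, hB1, smul_eq_mul, mul_one]
    -- second computation: B (ψ (k-1)) (e (ψ j)) = -C
    have hψj : (T ^ (k - 1 - j)) (ψ (k - 1)) = ψ j := by
      have h1 : j + (k - 1 - j) = k - 1 := by omega
      have := hpow (k - 1 - j) j (by omega)
      rwa [h1] at this
    have hC2 : B (ψ (k - 1)) (e (ψ j)) = -C := by
      have step1 : e (ψ j) = (T ^ (k - 1 - j)) (e (ψ (k - 1))) := by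
        rw [hTepow, hψj]
      rw [step1, ← hBTpow, hψj]
      have : B (ψ j) (e (ψ (k - 1))) = -B (e (ψ j)) (ψ (k - 1)) := by
        rw [hBe, neg_neg]
      rw [this, hC, map_smul, LinearMap.smul_apply, hB2, smul_eq_mul, mul_one]
    have : C = 0 := by
      have hcc := hC1.symm.trans hC2
      linear_combination hcc / 2
    rw [hC, this, zero_smul]
end

section
/- Let α > 0 and e = -r₀^t ∂ r₀ with r₀ = ∂ + α·tanh(αx) and r₀^t = -∂ + α·tanh(αx). Then e commutes with h = -∂² - 2α²/cosh²(αx), i.e., e(hf) = h(ef) for all smooth f, and e satisfies -e² = (h - 0)·(h + α²)² as differential operators. -/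
/-- The first-order operator `r₀ = ∂ + α tanh(αx)`. -/
noncomputable def r₀PT (α : ℝ) (f : ℝ → ℂ) : ℝ → ℂ :=
  fun x => deriv f x + (α : ℂ) * (Real.tanh (α * x) : ℂ) * f x

/-- Its formal transpose `r₀ᵗ = -∂ + α tanh(αx)`. -/
noncomputable def r₀tPT (α : ℝ) (f : ℝ → ℂ) : ℝ → ℂ :=
  fun x => -deriv f x + (α : ℂ) * (Real.tanh (α * x) : ℂ) * f x

/-- The Pöschl–Teller Hamiltonian `h = -∂² - 2α²/cosh²(αx)`. -/
noncomputable def hPT (α : ℝ) (f : ℝ → ℂ) : ℝ → ℂ :=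
  fun x => -(deriv (deriv f) x) - ((2 * α ^ 2 / (Real.cosh (α * x)) ^ 2 : ℝ) : ℂ) * f x

/-- The third-order symmetry operator `e = -r₀ᵗ ∂ r₀`. -/
noncomputable def ePT (α : ℝ) (f : ℝ → ℂ) : ℝ → ℂ :=
  fun x => -(r₀tPT α (deriv (r₀PT α f)) x)

noncomputable def tC (α : ℝ) : ℝ → ℂ := fun x => (Real.tanh (α * x) : ℂ)

lemma hasDerivAt_tanh (y : ℝ) :
    HasDerivAt Real.tanh (1 - Real.tanh y ^ 2) y := by
  have h := (Real.hasDerivAt_sinh y).div (Real.hasDerivAt_cosh y) (Real.cosh_pos y).ne'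
  have hv : (Real.cosh y * Real.cosh y - Real.sinh y * Real.sinh y) / Real.cosh y ^ 2
      = 1 - Real.tanh y ^ 2 := by
    rw [Real.tanh_eq_sinh_div_cosh]
    have hc := (Real.cosh_pos y).ne'
    field_simp
  have h2 : (Real.sinh / Real.cosh) = Real.tanh := by
    funext x; exact (Real.tanh_eq_sinh_div_cosh x).symm
  rw [h2, hv] at h
  exact h

lemma hasDerivAt_tC (α : ℝ) (x : ℝ) :
    HasDerivAt (tC α) ((α : ℂ) * (1 - tC α x ^ 2)) x := by
  have h1 : HasDerivAt (fun y : ℝ => α * y) α x := by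
    simpa using (hasDerivAt_id x).const_mul α
  have h2 := (hasDerivAt_tanh (α * x)).comp x h1
  have h3 := h2.ofReal_comp
  unfold tC
  convert h3 using 1
  · rfl
  push_cast
  ring

lemma hpowt' (α : ℝ) (k : ℕ) (x : ℝ) :
    HasDerivAt (fun y => tC α y ^ (k + 1))
      (((k : ℂ) + 1) * tC α x ^ k * ((α : ℂ) * (1 - tC α x ^ 2))) x := by
  induction k with
  | zero =>
    have h := hasDerivAt_tC α x
    have e : (fun y => tC α y ^ (0 + 1)) = tC α := by funext y; simp
    rw [e]
    convert h using 1
    ring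
  | succ k ih =>
    have e : (fun y => tC α y ^ (k + 1 + 1)) = fun y => tC α y ^ (k + 1) * tC α y := by
      funext y; rw [pow_succ]
    rw [e]
    have h := ih.mul (hasDerivAt_tC α x)
    convert h using 1
    · rfl
    · rfl
    push_cast
    ring

lemma hpowt (α : ℝ) (k : ℕ) (x : ℝ) :
    HasDerivAt (fun y => tC α y ^ k)
      ((k : ℂ) * tC α x ^ (k - 1) * ((α : ℂ) * (1 - tC α x ^ 2))) x := by
  cases k with
  | zero => simpa using hasDerivAt_const x (1 : ℂ)
  | succ k => simpa using hpowt' α k x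

lemma hdt {α : ℝ} (c : ℂ) (k : ℕ) {g g' : ℝ → ℂ}
    (hg : ∀ x, HasDerivAt g (g' x) x) (x : ℝ) :
    HasDerivAt (fun y => c * tC α y ^ k * g y)
      (c * ((k : ℂ) * tC α x ^ (k - 1) * ((α : ℂ) * (1 - tC α x ^ 2))) * g x
        + c * tC α x ^ k * g' x) x :=
  (((hpowt α k x).const_mul c).mul (hg x))

lemma coshCast (α x : ℝ) :
    ((2 * α ^ 2 / (Real.cosh (α * x)) ^ 2 : ℝ) : ℂ)
      = 2 * (α : ℂ) ^ 2 * (1 - tC α x ^ 2) := by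
  have hc := (Real.cosh_pos (α * x)).ne'
  have hr : (2 * α ^ 2 / (Real.cosh (α * x)) ^ 2 : ℝ)
      = 2 * α ^ 2 * (1 - Real.tanh (α * x) ^ 2) := by
    rw [Real.tanh_eq_sinh_div_cosh]
    field_simp
    rw [Real.cosh_sq_sub_sinh_sq, mul_one]
  rw [hr]
  unfold tC
  push_cast
  ring

lemma hPT_apply {α : ℝ} {g g1 g2 : ℝ → ℂ}
    (h1 : ∀ x, HasDerivAt g (g1 x) x) (h2 : ∀ x, HasDerivAt g1 (g2 x) x) (x : ℝ) :
    hPT α g x = -(g2 x) - 2 * (α : ℂ) ^ 2 * (1 - tC α x ^ 2) * g x := by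
  have ed : deriv g = g1 := funext fun y => (h1 y).deriv
  unfold hPT
  rw [coshCast, ed, (h2 x).deriv]

lemma ePT_apply {α : ℝ} {g g1 g2 g3 : ℝ → ℂ}
    (h1 : ∀ x, HasDerivAt g (g1 x) x) (h2 : ∀ x, HasDerivAt g1 (g2 x) x)
    (h3 : ∀ x, HasDerivAt g2 (g3 x) x) (x : ℝ) :
    ePT α g x = g3 x + (α : ℂ) ^ 2 * (2 - 3 * tC α x ^ 2) * g1 x
      - 3 * (α : ℂ) ^ 3 * tC α x * (1 - tC α x ^ 2) * g x := by
  have ed : deriv g = g1 := funext fun y => (h1 y).deriv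
  have ec1 : r₀PT α g = fun y =>
      (1 : ℂ) * tC α y ^ 0 * g1 y + ((1 : ℂ) * (α : ℂ) ^ 1) * tC α y ^ 1 * g y := by
    funext y
    unfold r₀PT tC
    rw [ed]
    ring
  have hC1 : ∀ y : ℝ, HasDerivAt
      (fun y => (1 : ℂ) * tC α y ^ 0 * g1 y + ((1 : ℂ) * (α : ℂ) ^ 1) * tC α y ^ 1 * g y)
      ((1 : ℂ) * tC α y ^ 0 * g2 y + ((1 : ℂ) * (α : ℂ) ^ 2) * tC α y ^ 0 * g y
        + ((-1 : ℂ) * (α : ℂ) ^ 2) * tC α y ^ 2 * g y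
        + ((1 : ℂ) * (α : ℂ) ^ 1) * tC α y ^ 1 * g1 y) y := by
    intro y
    have h := (hdt (α := α) (1 : ℂ) 0 h2 y).add
      (hdt (α := α) ((1 : ℂ) * (α : ℂ) ^ 1) 1 h1 y)
    convert h using 1
    · rfl
    · rfl
    push_cast
    ring
  have ec2 : deriv (r₀PT α g) = fun y =>
      (1 : ℂ) * tC α y ^ 0 * g2 y + ((1 : ℂ) * (α : ℂ) ^ 2) * tC α y ^ 0 * g y
        + ((-1 : ℂ) * (α : ℂ) ^ 2) * tC α y ^ 2 * g y
        + ((1 : ℂ) * (α : ℂ) ^ 1) * tC α y ^ 1 * g1 y := by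
    rw [ec1]
    exact funext fun y => (hC1 y).deriv
  have hC2 : ∀ y : ℝ, HasDerivAt
      (fun y => (1 : ℂ) * tC α y ^ 0 * g2 y + ((1 : ℂ) * (α : ℂ) ^ 2) * tC α y ^ 0 * g y
        + ((-1 : ℂ) * (α : ℂ) ^ 2) * tC α y ^ 2 * g y
        + ((1 : ℂ) * (α : ℂ) ^ 1) * tC α y ^ 1 * g1 y)
      ((1 : ℂ) * tC α y ^ 0 * g3 y + ((2 : ℂ) * (α : ℂ) ^ 2) * tC α y ^ 0 * g1 y
        + ((-2 : ℂ) * (α : ℂ) ^ 2) * tC α y ^ 2 * g1 y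
        + ((-2 : ℂ) * (α : ℂ) ^ 3) * tC α y ^ 1 * g y
        + ((2 : ℂ) * (α : ℂ) ^ 3) * tC α y ^ 3 * g y
        + ((1 : ℂ) * (α : ℂ) ^ 1) * tC α y ^ 1 * g2 y) y := by
    intro y
    have h := (((hdt (α := α) (1 : ℂ) 0 h3 y).add
      (hdt (α := α) ((1 : ℂ) * (α : ℂ) ^ 2) 0 h1 y)).add
      (hdt (α := α) ((-1 : ℂ) * (α : ℂ) ^ 2) 2 h1 y)).add
      (hdt (α := α) ((1 : ℂ) * (α : ℂ) ^ 1) 1 h2 y)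
    convert h using 1
    · rfl
    · rfl
    push_cast
    ring
  have edd : deriv (deriv (r₀PT α g)) x
      = (1 : ℂ) * tC α x ^ 0 * g3 x + ((2 : ℂ) * (α : ℂ) ^ 2) * tC α x ^ 0 * g1 x
        + ((-2 : ℂ) * (α : ℂ) ^ 2) * tC α x ^ 2 * g1 x
        + ((-2 : ℂ) * (α : ℂ) ^ 3) * tC α x ^ 1 * g x
        + ((2 : ℂ) * (α : ℂ) ^ 3) * tC α x ^ 3 * g x
        + ((1 : ℂ) * (α : ℂ) ^ 1) * tC α x ^ 1 * g2 x := by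
    rw [ec2]
    exact (hC2 x).deriv
  show -(-deriv (deriv (r₀PT α g)) x
      + (α : ℂ) * (Real.tanh (α * x) : ℂ) * deriv (r₀PT α g) x) = _
  rw [edd, ec2]
  show -(_ + (α : ℂ) * tC α x * _) = _
  ring

noncomputable def cG0 (α : ℝ) (f : ℝ → ℂ) : ℝ → ℂ :=
  fun y => ((-2 : ℂ) * (α:ℂ) ^ 2) * tC α y ^ 0 * f y + ((-1 : ℂ)) * tC α y ^ 0 * deriv^[2] f y + ((2 : ℂ) * (α:ℂ) ^ 2) * tC α y ^ 2 * f y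

noncomputable def cG1 (α : ℝ) (f : ℝ → ℂ) : ℝ → ℂ :=
  fun y => ((-2 : ℂ) * (α:ℂ) ^ 2) * tC α y ^ 0 * deriv^[1] f y + ((-1 : ℂ)) * tC α y ^ 0 * deriv^[3] f y + ((4 : ℂ) * (α:ℂ) ^ 3) * tC α y ^ 1 * f y + ((2 : ℂ) * (α:ℂ) ^ 2) * tC α y ^ 2 * deriv^[1] f y + ((-4 : ℂ) * (α:ℂ) ^ 3) * tC α y ^ 3 * f y

noncomputable def cG2 (α : ℝ) (f : ℝ → ℂ) : ℝ → ℂ :=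
  fun y => ((4 : ℂ) * (α:ℂ) ^ 4) * tC α y ^ 0 * f y + ((-2 : ℂ) * (α:ℂ) ^ 2) * tC α y ^ 0 * deriv^[2] f y + ((-1 : ℂ)) * tC α y ^ 0 * deriv^[4] f y + ((8 : ℂ) * (α:ℂ) ^ 3) * tC α y ^ 1 * deriv^[1] f y + ((-16 : ℂ) * (α:ℂ) ^ 4) * tC α y ^ 2 * f y + ((2 : ℂ) * (α:ℂ) ^ 2) * tC α y ^ 2 * deriv^[2] f y + ((-8 : ℂ) * (α:ℂ) ^ 3) * tC α y ^ 3 * deriv^[1] f y + ((12 : ℂ) * (α:ℂ) ^ 4) * tC α y ^ 4 * f y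

noncomputable def cG3 (α : ℝ) (f : ℝ → ℂ) : ℝ → ℂ :=
  fun y => ((12 : ℂ) * (α:ℂ) ^ 4) * tC α y ^ 0 * deriv^[1] f y + ((-2 : ℂ) * (α:ℂ) ^ 2) * tC α y ^ 0 * deriv^[3] f y + ((-1 : ℂ)) * tC α y ^ 0 * deriv^[5] f y + ((-32 : ℂ) * (α:ℂ) ^ 5) * tC α y ^ 1 * f y + ((12 : ℂ) * (α:ℂ) ^ 3) * tC α y ^ 1 * deriv^[2] f y + ((-48 : ℂ) * (α:ℂ) ^ 4) * tC α y ^ 2 * deriv^[1] f y + ((2 : ℂ) * (α:ℂ) ^ 2) * tC α y ^ 2 * deriv^[3] f y + ((80 : ℂ) * (α:ℂ) ^ 5) * tC α y ^ 3 * f y + ((-12 : ℂ) * (α:ℂ) ^ 3) * tC α y ^ 3 * deriv^[2] f y + ((36 : ℂ) * (α:ℂ) ^ 4) * tC α y ^ 4 * deriv^[1] f y + ((-48 : ℂ) * (α:ℂ) ^ 5) * tC α y ^ 5 * f y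

noncomputable def cE0 (α : ℝ) (f : ℝ → ℂ) : ℝ → ℂ :=
  fun y => ((2 : ℂ) * (α:ℂ) ^ 2) * tC α y ^ 0 * deriv^[1] f y + ((1 : ℂ)) * tC α y ^ 0 * deriv^[3] f y + ((-3 : ℂ) * (α:ℂ) ^ 3) * tC α y ^ 1 * f y + ((-3 : ℂ) * (α:ℂ) ^ 2) * tC α y ^ 2 * deriv^[1] f y + ((3 : ℂ) * (α:ℂ) ^ 3) * tC α y ^ 3 * f y

noncomputable def cE1 (α : ℝ) (f : ℝ → ℂ) : ℝ → ℂ :=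
  fun y => ((-3 : ℂ) * (α:ℂ) ^ 4) * tC α y ^ 0 * f y + ((2 : ℂ) * (α:ℂ) ^ 2) * tC α y ^ 0 * deriv^[2] f y + ((1 : ℂ)) * tC α y ^ 0 * deriv^[4] f y + ((-9 : ℂ) * (α:ℂ) ^ 3) * tC α y ^ 1 * deriv^[1] f y + ((12 : ℂ) * (α:ℂ) ^ 4) * tC α y ^ 2 * f y + ((-3 : ℂ) * (α:ℂ) ^ 2) * tC α y ^ 2 * deriv^[2] f y + ((9 : ℂ) * (α:ℂ) ^ 3) * tC α y ^ 3 * deriv^[1] f y + ((-9 : ℂ) * (α:ℂ) ^ 4) * tC α y ^ 4 * f y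

noncomputable def cE2 (α : ℝ) (f : ℝ → ℂ) : ℝ → ℂ :=
  fun y => ((-12 : ℂ) * (α:ℂ) ^ 4) * tC α y ^ 0 * deriv^[1] f y + ((2 : ℂ) * (α:ℂ) ^ 2) * tC α y ^ 0 * deriv^[3] f y + ((1 : ℂ)) * tC α y ^ 0 * deriv^[5] f y + ((24 : ℂ) * (α:ℂ) ^ 5) * tC α y ^ 1 * f y + ((-15 : ℂ) * (α:ℂ) ^ 3) * tC α y ^ 1 * deriv^[2] f y + ((48 : ℂ) * (α:ℂ) ^ 4) * tC α y ^ 2 * deriv^[1] f y + ((-3 : ℂ) * (α:ℂ) ^ 2) * tC α y ^ 2 * deriv^[3] f y + ((-60 : ℂ) * (α:ℂ) ^ 5) * tC α y ^ 3 * f y + ((15 : ℂ) * (α:ℂ) ^ 3) * tC α y ^ 3 * deriv^[2] f y + ((-36 : ℂ) * (α:ℂ) ^ 4) * tC α y ^ 4 * deriv^[1] f y + ((36 : ℂ) * (α:ℂ) ^ 5) * tC α y ^ 5 * f y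

noncomputable def cE3 (α : ℝ) (f : ℝ → ℂ) : ℝ → ℂ :=
  fun y => ((24 : ℂ) * (α:ℂ) ^ 6) * tC α y ^ 0 * f y + ((-27 : ℂ) * (α:ℂ) ^ 4) * tC α y ^ 0 * deriv^[2] f y + ((2 : ℂ) * (α:ℂ) ^ 2) * tC α y ^ 0 * deriv^[4] f y + ((1 : ℂ)) * tC α y ^ 0 * deriv^[6] f y + ((120 : ℂ) * (α:ℂ) ^ 5) * tC α y ^ 1 * deriv^[1] f y + ((-21 : ℂ) * (α:ℂ) ^ 3) * tC α y ^ 1 * deriv^[3] f y + ((-204 : ℂ) * (α:ℂ) ^ 6) * tC α y ^ 2 * f y + ((108 : ℂ) * (α:ℂ) ^ 4) * tC α y ^ 2 * deriv^[2] f y + ((-3 : ℂ) * (α:ℂ) ^ 2) * tC α y ^ 2 * deriv^[4] f y + ((-300 : ℂ) * (α:ℂ) ^ 5) * tC α y ^ 3 * deriv^[1] f y + ((21 : ℂ) * (α:ℂ) ^ 3) * tC α y ^ 3 * deriv^[3] f y + ((360 : ℂ) * (α:ℂ) ^ 6) * tC α y ^ 4 * f y + ((-81 : ℂ) * (α:ℂ)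 ^ 4) * tC α y ^ 4 * deriv^[2] f y + ((180 : ℂ) * (α:ℂ) ^ 5) * tC α y ^ 5 * deriv^[1] f y + ((-180 : ℂ) * (α:ℂ) ^ 6) * tC α y ^ 6 * f y

noncomputable def cU0 (α : ℝ) (f : ℝ → ℂ) : ℝ → ℂ :=
  fun y => ((-1 : ℂ) * (α:ℂ) ^ 2) * tC α y ^ 0 * f y + ((-1 : ℂ)) * tC α y ^ 0 * deriv^[2] f y + ((2 : ℂ) * (α:ℂ) ^ 2) * tC α y ^ 2 * f y

noncomputable def cU1 (α : ℝ) (f : ℝ → ℂ) : ℝ → ℂ :=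
  fun y => ((-1 : ℂ) * (α:ℂ) ^ 2) * tC α y ^ 0 * deriv^[1] f y + ((-1 : ℂ)) * tC α y ^ 0 * deriv^[3] f y + ((4 : ℂ) * (α:ℂ) ^ 3) * tC α y ^ 1 * f y + ((2 : ℂ) * (α:ℂ) ^ 2) * tC α y ^ 2 * deriv^[1] f y + ((-4 : ℂ) * (α:ℂ) ^ 3) * tC α y ^ 3 * f y

noncomputable def cU2 (α : ℝ) (f : ℝ → ℂ) : ℝ → ℂ :=
  fun y => ((4 : ℂ) * (α:ℂ) ^ 4) * tC α y ^ 0 * f y + ((-1 : ℂ) * (α:ℂ) ^ 2) * tC α y ^ 0 * deriv^[2] f y + ((-1 : ℂ)) * tC α y ^ 0 * deriv^[4] f y + ((8 : ℂ) * (α:ℂ) ^ 3) * tC α y ^ 1 * deriv^[1] f y + ((-16 : ℂ) * (α:ℂ) ^ 4) * tC α y ^ 2 * f y + ((2 : ℂ) * (α:ℂ) ^ 2) * tC α y ^ 2 * deriv^[2] f y + ((-8 : ℂ) * (α:ℂ) ^ 3) * tC α y ^ 3 * deriv^[1] f y + ((12 : ℂ) * (α:ℂ) ^ 4) * tC α y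 ^ 4 * f y

noncomputable def cV0 (α : ℝ) (f : ℝ → ℂ) : ℝ → ℂ :=
  fun y => ((-3 : ℂ) * (α:ℂ) ^ 4) * tC α y ^ 0 * f y + ((2 : ℂ) * (α:ℂ) ^ 2) * tC α y ^ 0 * deriv^[2] f y + ((1 : ℂ)) * tC α y ^ 0 * deriv^[4] f y + ((-8 : ℂ) * (α:ℂ) ^ 3) * tC α y ^ 1 * deriv^[1] f y + ((12 : ℂ) * (α:ℂ) ^ 4) * tC α y ^ 2 * f y + ((-4 : ℂ) * (α:ℂ) ^ 2) * tC α y ^ 2 * deriv^[2] f y + ((8 : ℂ) * (α:ℂ) ^ 3) * tC α y ^ 3 * deriv^[1] f y + ((-8 : ℂ) * (α:ℂ) ^ 4) * tC α y ^ 4 * f y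

noncomputable def cV1 (α : ℝ) (f : ℝ → ℂ) : ℝ → ℂ :=
  fun y => ((-11 : ℂ) * (α:ℂ) ^ 4) * tC α y ^ 0 * deriv^[1] f y + ((2 : ℂ) * (α:ℂ) ^ 2) * tC α y ^ 0 * deriv^[3] f y + ((1 : ℂ)) * tC α y ^ 0 * deriv^[5] f y + ((24 : ℂ) * (α:ℂ) ^ 5) * tC α y ^ 1 * f y + ((-16 : ℂ) * (α:ℂ) ^ 3) * tC α y ^ 1 * deriv^[2] f y + ((44 : ℂ) * (α:ℂ) ^ 4) * tC α y ^ 2 * deriv^[1] f y + ((-4 : ℂ) * (α:ℂ) ^ 2) * tC α y ^ 2 * deriv^[3] f y + ((-56 : ℂ) * (α:ℂ) ^ 5) * tC α y ^ 3 * f y + ((16 : ℂ) * (α:ℂ) ^ 3) * tC α y ^ 3 * deriv^[2] f y + ((-32 : ℂ) * (α:ℂ) ^ 4) * tC α y ^ 4 * deriv^[1] f y + ((32 : ℂ) * (α:ℂ) ^ 5) * tC α y ^ 5 * f y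

noncomputable def cV2 (α : ℝ) (f : ℝ → ℂ) : ℝ → ℂ :=
  fun y => ((24 : ℂ) * (α:ℂ) ^ 6) * tC α y ^ 0 * f y + ((-27 : ℂ) * (α:ℂ) ^ 4) * tC α y ^ 0 * deriv^[2] f y + ((2 : ℂ) * (α:ℂ) ^ 2) * tC α y ^ 0 * deriv^[4] f y + ((1 : ℂ)) * tC α y ^ 0 * deriv^[6] f y + ((112 : ℂ) * (α:ℂ) ^ 5) * tC α y ^ 1 * deriv^[1] f y + ((-24 : ℂ) * (α:ℂ) ^ 3) * tC α y ^ 1 * deriv^[3] f y + ((-192 : ℂ) * (α:ℂ) ^ 6) * tC α y ^ 2 * f y + ((108 : ℂ) * (α:ℂ) ^ 4) * tC α y ^ 2 * deriv^[2] f y + ((-4 : ℂ) * (α:ℂ) ^ 2) * tC α y ^ 2 * deriv^[4] f y + ((-272 : ℂ) * (α:ℂ) ^ 5) * tC α y ^ 3 * deriv^[1] f y + ((24 : ℂ) * (α:ℂ) ^ 3) * tC α y ^ 3 * deriv^[3] f y + ((328 : ℂ) * (α:ℂ) ^ 6) * tC α y ^ 4 * f y + ((-80 : ℂ) * (α:ℂ)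 ^ 4) * tC α y ^ 4 * deriv^[2] f y + ((160 : ℂ) * (α:ℂ) ^ 5) * tC α y ^ 5 * deriv^[1] f y + ((-160 : ℂ) * (α:ℂ) ^ 6) * tC α y ^ 6 * f y

/-- `e = -r₀ᵗ ∂ r₀` commutes with the Pöschl–Teller Hamiltonian `h` and satisfies
`-e² = (h - 0)(h + α²)²` as differential operators on smooth functions. -/
theorem stmt_9 (α : ℝ) (hα : 0 < α) (f : ℝ → ℂ) (hf : ContDiff ℝ (⊤ : ℕ∞) f) :
    (∀ x : ℝ, ePT α (hPT α f) x = hPT α (ePT α f) x) ∧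
    (∀ x : ℝ, -(ePT α (ePT α f) x) =
      hPT α ((fun g : ℝ → ℂ => fun y => hPT α g y + (α : ℂ) ^ 2 * g y)
        ((fun g : ℝ → ℂ => fun y => hPT α g y + (α : ℂ) ^ 2 * g y) f)) x) := by
  have hf' : ∀ (n : ℕ) (x : ℝ), HasDerivAt (deriv^[n] f) (deriv^[n + 1] f x) x := by
    intro n x
    have h : ContDiff ℝ ((⊤ : ℕ∞) : WithTop ℕ∞) (deriv^[n] f) :=
      ContDiff.iterate_deriv n (hf.of_le (by simp))
    have h2 := (h.differentiable (by norm_num) x).hasDerivAt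
    rwa [Function.iterate_succ_apply']
  have hfd0 : ∀ x : ℝ, HasDerivAt (f) (deriv^[1] f x) x := hf' 0
  have hfd1 : ∀ x : ℝ, HasDerivAt (deriv^[1] f) (deriv^[2] f x) x := hf' 1
  have hfd2 : ∀ x : ℝ, HasDerivAt (deriv^[2] f) (deriv^[3] f x) x := hf' 2
  have hfd3 : ∀ x : ℝ, HasDerivAt (deriv^[3] f) (deriv^[4] f x) x := hf' 3
  have hfd4 : ∀ x : ℝ, HasDerivAt (deriv^[4] f) (deriv^[5] f x) x := hf' 4
  have hfd5 : ∀ x : ℝ, HasDerivAt (deriv^[5] f) (deriv^[6] f x) x := hf' 5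
  have egf : hPT α f = cG0 α f := by
    funext y
    have h2 : deriv (deriv f) y = deriv^[2] f y := rfl
    unfold hPT cG0
    rw [h2, coshCast]
    ring
  have eef : ePT α f = cE0 α f := by
    funext y
    rw [ePT_apply hfd0 hfd1 hfd2 y]
    unfold cE0
    ring
  have hG0 : ∀ x : ℝ, HasDerivAt (cG0 α f) (cG1 α f x) x := by
    intro x
    have h := (((hdt (α := α) ((-2 : ℂ) * (α:ℂ) ^ 2) 0 hfd0 x).add (hdt (α := α) ((-1 : ℂ)) 0 hfd2 x)).add (hdt (α := α) ((2 : ℂ) * (α:ℂ) ^ 2) 2 hfd0 x))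
    unfold cG0 cG1
    convert h using 1
    · rfl
    · rfl
    push_cast
    ring
  have hG1 : ∀ x : ℝ, HasDerivAt (cG1 α f) (cG2 α f x) x := by
    intro x
    have h := (((((hdt (α := α) ((-2 : ℂ) * (α:ℂ) ^ 2) 0 hfd1 x).add (hdt (α := α) ((-1 : ℂ)) 0 hfd3 x)).add (hdt (α := α) ((4 : ℂ) * (α:ℂ) ^ 3) 1 hfd0 x)).add (hdt (α := α) ((2 : ℂ) * (α:ℂ) ^ 2) 2 hfd1 x)).add (hdt (α := α) ((-4 : ℂ) * (α:ℂ) ^ 3) 3 hfd0 x))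
    unfold cG1 cG2
    convert h using 1
    · rfl
    · rfl
    push_cast
    ring
  have hG2 : ∀ x : ℝ, HasDerivAt (cG2 α f) (cG3 α f x) x := by
    intro x
    have h := ((((((((hdt (α := α) ((4 : ℂ) * (α:ℂ) ^ 4) 0 hfd0 x).add (hdt (α := α) ((-2 : ℂ) * (α:ℂ) ^ 2) 0 hfd2 x)).add (hdt (α := α) ((-1 : ℂ)) 0 hfd4 x)).add (hdt (α := α) ((8 : ℂ) * (α:ℂ) ^ 3) 1 hfd1 x)).add (hdt (α := α) ((-16 : ℂ) * (α:ℂ) ^ 4) 2 hfd0 x)).add (hdt (α := α) ((2 : ℂ) * (α:ℂ) ^ 2) 2 hfd2 x)).add (hdt (α := α) ((-8 : ℂ) * (α:ℂ) ^ 3) 3 hfd1 x)).add (hdt (α := α) ((12 : ℂ) * (α:ℂ) ^ 4) 4 hfd0 x))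
    unfold cG2 cG3
    convert h using 1
    · rfl
    · rfl
    push_cast
    ring
  have hE0 : ∀ x : ℝ, HasDerivAt (cE0 α f) (cE1 α f x) x := by
    intro x
    have h := (((((hdt (α := α) ((2 : ℂ) * (α:ℂ) ^ 2) 0 hfd1 x).add (hdt (α := α) ((1 : ℂ)) 0 hfd3 x)).add (hdt (α := α) ((-3 : ℂ) * (α:ℂ) ^ 3) 1 hfd0 x)).add (hdt (α := α) ((-3 : ℂ) * (α:ℂ) ^ 2) 2 hfd1 x)).add (hdt (α := α) ((3 : ℂ) * (α:ℂ) ^ 3) 3 hfd0 x))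
    unfold cE0 cE1
    convert h using 1
    · rfl
    · rfl
    push_cast
    ring
  have hE1 : ∀ x : ℝ, HasDerivAt (cE1 α f) (cE2 α f x) x := by
    intro x
    have h := ((((((((hdt (α := α) ((-3 : ℂ) * (α:ℂ) ^ 4) 0 hfd0 x).add (hdt (α := α) ((2 : ℂ) * (α:ℂ) ^ 2) 0 hfd2 x)).add (hdt (α := α) ((1 : ℂ)) 0 hfd4 x)).add (hdt (α := α) ((-9 : ℂ) * (α:ℂ) ^ 3) 1 hfd1 x)).add (hdt (α := α) ((12 : ℂ) * (α:ℂ) ^ 4) 2 hfd0 x)).add (hdt (α := α) ((-3 : ℂ) * (α:ℂ) ^ 2) 2 hfd2 x)).add (hdt (α := α) ((9 : ℂ) * (α:ℂ) ^ 3) 3 hfd1 x)).add (hdt (α := α) ((-9 : ℂ) * (α:ℂ) ^ 4) 4 hfd0 x))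
    unfold cE1 cE2
    convert h using 1
    · rfl
    · rfl
    push_cast
    ring
  have hE2 : ∀ x : ℝ, HasDerivAt (cE2 α f) (cE3 α f x) x := by
    intro x
    have h := (((((((((((hdt (α := α) ((-12 : ℂ) * (α:ℂ) ^ 4) 0 hfd1 x).add (hdt (α := α) ((2 : ℂ) * (α:ℂ) ^ 2) 0 hfd3 x)).add (hdt (α := α) ((1 : ℂ)) 0 hfd5 x)).add (hdt (α := α) ((24 : ℂ) * (α:ℂ) ^ 5) 1 hfd0 x)).add (hdt (α := α) ((-15 : ℂ) * (α:ℂ) ^ 3) 1 hfd2 x)).add (hdt (α := α) ((48 : ℂ) * (α:ℂ) ^ 4) 2 hfd1 x)).add (hdt (α := α) ((-3 : ℂ) * (α:ℂ) ^ 2) 2 hfd3 x)).add (hdt (α := α) ((-60 : ℂ) * (α:ℂ) ^ 5) 3 hfd0 x)).add (hdt (α := α) ((15 : ℂ) * (α:ℂ) ^ 3) 3 hfd2 x)).add (hdt (α := α) ((-36 : ℂ) * (α:ℂ) ^ 4) 4 hfd1 x)).add (hdt (α := α) ((36 : ℂ) * (α:ℂ) ^ 5) 5 hfd0 x))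
    unfold cE2 cE3
    convert h using 1
    · rfl
    · rfl
    push_cast
    ring
  have hU0 : ∀ x : ℝ, HasDerivAt (cU0 α f) (cU1 α f x) x := by
    intro x
    have h := (((hdt (α := α) ((-1 : ℂ) * (α:ℂ) ^ 2) 0 hfd0 x).add (hdt (α := α) ((-1 : ℂ)) 0 hfd2 x)).add (hdt (α := α) ((2 : ℂ) * (α:ℂ) ^ 2) 2 hfd0 x))
    unfold cU0 cU1
    convert h using 1
    · rfl
    · rfl
    push_cast
    ring
  have hU1 : ∀ x : ℝ, HasDerivAt (cU1 α f) (cU2 α f x) x := by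
    intro x
    have h := (((((hdt (α := α) ((-1 : ℂ) * (α:ℂ) ^ 2) 0 hfd1 x).add (hdt (α := α) ((-1 : ℂ)) 0 hfd3 x)).add (hdt (α := α) ((4 : ℂ) * (α:ℂ) ^ 3) 1 hfd0 x)).add (hdt (α := α) ((2 : ℂ) * (α:ℂ) ^ 2) 2 hfd1 x)).add (hdt (α := α) ((-4 : ℂ) * (α:ℂ) ^ 3) 3 hfd0 x))
    unfold cU1 cU2
    convert h using 1
    · rfl
    · rfl
    push_cast
    ring
  have hV0 : ∀ x : ℝ, HasDerivAt (cV0 α f) (cV1 α f x) x := by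
    intro x
    have h := ((((((((hdt (α := α) ((-3 : ℂ) * (α:ℂ) ^ 4) 0 hfd0 x).add (hdt (α := α) ((2 : ℂ) * (α:ℂ) ^ 2) 0 hfd2 x)).add (hdt (α := α) ((1 : ℂ)) 0 hfd4 x)).add (hdt (α := α) ((-8 : ℂ) * (α:ℂ) ^ 3) 1 hfd1 x)).add (hdt (α := α) ((12 : ℂ) * (α:ℂ) ^ 4) 2 hfd0 x)).add (hdt (α := α) ((-4 : ℂ) * (α:ℂ) ^ 2) 2 hfd2 x)).add (hdt (α := α) ((8 : ℂ) * (α:ℂ) ^ 3) 3 hfd1 x)).add (hdt (α := α) ((-8 : ℂ) * (α:ℂ) ^ 4) 4 hfd0 x))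
    unfold cV0 cV1
    convert h using 1
    · rfl
    · rfl
    push_cast
    ring
  have hV1 : ∀ x : ℝ, HasDerivAt (cV1 α f) (cV2 α f x) x := by
    intro x
    have h := (((((((((((hdt (α := α) ((-11 : ℂ) * (α:ℂ) ^ 4) 0 hfd1 x).add (hdt (α := α) ((2 : ℂ) * (α:ℂ) ^ 2) 0 hfd3 x)).add (hdt (α := α) ((1 : ℂ)) 0 hfd5 x)).add (hdt (α := α) ((24 : ℂ) * (α:ℂ) ^ 5) 1 hfd0 x)).add (hdt (α := α) ((-16 : ℂ) * (α:ℂ) ^ 3) 1 hfd2 x)).add (hdt (α := α) ((44 : ℂ) * (α:ℂ) ^ 4) 2 hfd1 x)).add (hdt (α := α) ((-4 : ℂ) * (α:ℂ) ^ 2) 2 hfd3 x)).add (hdt (α := α) ((-56 : ℂ) * (α:ℂ) ^ 5) 3 hfd0 x)).add (hdt (α := α) ((16 : ℂ) * (α:ℂ) ^ 3) 3 hfd2 x)).add (hdt (α := α) ((-32 : ℂ) * (α:ℂ) ^ 4) 4 hfd1 x)).add (hdt (α := α) ((32 : ℂ) * (α:ℂ) ^ 5) 5 hfd0 x))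
    unfold cV1 cV2
    convert h using 1
    · rfl
    · rfl
    push_cast
    ring
  constructor
  · intro x
    rw [egf, ePT_apply hG0 hG1 hG2 x, eef, hPT_apply hE0 hE1 x]
    unfold cG0 cG1 cG3 cE0 cE2
    ring
  · intro x
    have e1 : (fun g : ℝ → ℂ => fun y => hPT α g y + (α : ℂ) ^ 2 * g y) f = cU0 α f := by
      show (fun y => hPT α f y + (α : ℂ) ^ 2 * f y) = cU0 α f
      funext y
      rw [hPT_apply hfd0 hfd1 y]
      unfold cU0
      ring
    have e2 : (fun g : ℝ → ℂ => fun y => hPT α g y + (α : ℂ) ^ 2 * g y) (cU0 α f) = cV0 α f := by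
      show (fun y => hPT α (cU0 α f) y + (α : ℂ) ^ 2 * cU0 α f y) = cV0 α f
      funext y
      rw [hPT_apply hU0 hU1 y]
      unfold cU0 cU2 cV0
      ring
    rw [e1, e2, eef, ePT_apply hE0 hE1 hE2 x, hPT_apply hV0 hV1 x]
    unfold cE0 cE1 cE3 cV0 cV2
    ring
end

section
/- Let W₀, W₁, W₂, ... be smooth real-valued functions on an interval (a, ∞) with W₀ ≡ 1, satisfying the Riccati-chain relations (W_l/W_{l-2})' = -(W_{l-1}/W_{l-2})² for l ≥ 2 wherever W_{l-2} ≠ 0. If x₀ ∈ (a, ∞) and W_{l-1}, W_{l-2}, W_{l-3} are nonvanishing on [x₀, ∞), then for all x > x₀ the Cauchy–Schwarz estimate (x - x₀)² ≤ (W_l(x₀)/W_{l-2}(x₀) - W_l(x)/W_{l-2}(x)) · (W_{l-3}(x)/W_{l-1}(x) - W_{l-3}(x₀)/W_{l-1}(x₀)) holds. -/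
/-- Cauchy–Schwarz (Bunyakovsky) estimate for a Riccati chain of Wronskians:
for smooth functions `W₀ ≡ 1, W₁, W₂, ...` on `(a, ∞)` satisfying
`(W_m/W_{m-2})' = -(W_{m-1}/W_{m-2})²` wherever `W_{m-2} ≠ 0`, if
`W_{l-1}, W_{l-2}, W_{l-3}` are nonvanishing on `[x₀, ∞)`, then for all `x > x₀`,
`(x-x₀)² ≤ (W_l(x₀)/W_{l-2}(x₀) - W_l(x)/W_{l-2}(x)) ·
(W_{l-3}(x)/W_{l-1}(x) - W_{l-3}(x₀)/W_{l-1}(x₀))`. -/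
theorem stmt_19 (W : ℕ → ℝ → ℝ) (a x₀ : ℝ) (hax₀ : a < x₀)
    (hW0 : ∀ x, W 0 x = 1)
    (hsmooth : ∀ n, ContDiffOn ℝ (⊤ : ℕ∞) (W n) (Set.Ioi a))
    (hchain : ∀ m, 2 ≤ m → ∀ x, a < x → W (m - 2) x ≠ 0 →
      deriv (fun y => W m y / W (m - 2) y) x = -(W (m - 1) x / W (m - 2) x) ^ 2)
    (l : ℕ) (hl : 3 ≤ l)
    (hnv : ∀ x, x₀ ≤ x → W (l - 1) x ≠ 0 ∧ W (l - 2) x ≠ 0 ∧ W (l - 3) x ≠ 0) :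
    ∀ x, x₀ < x →
      (x - x₀) ^ 2 ≤
        (W l x₀ / W (l - 2) x₀ - W l x / W (l - 2) x) *
          (W (l - 3) x / W (l - 1) x - W (l - 3) x₀ / W (l - 1) x₀) := by
  intro x hx
  have hax : ∀ y : ℝ, x₀ ≤ y → a < y := fun y hy => lt_of_lt_of_le hax₀ hy
  have hdiffW : ∀ n (y : ℝ), a < y → DifferentiableAt ℝ (W n) y := by
    intro n y hy
    exact ((hsmooth n).contDiffAt ((isOpen_Ioi).mem_nhds hy)).differentiableAt (by simp)
  set f : ℝ → ℝ := fun y => -(W l y / W (l - 2) y) with hfdef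
  set g : ℝ → ℝ := fun y => W (l - 3) y / W (l - 1) y with hgdef
  -- derivative of f
  have hf' : ∀ y, x₀ ≤ y → HasDerivAt f ((W (l - 1) y / W (l - 2) y) ^ 2) y := by
    intro y hy
    have hay := hax y hy
    obtain ⟨h1, h2, h3⟩ := hnv y hy
    have hq : DifferentiableAt ℝ (fun z => W l z / W (l - 2) z) y :=
      (hdiffW l y hay).div (hdiffW (l - 2) y hay) h2
    have hd := hq.hasDerivAt
    rw [hchain l (by omega) y hay h2] at hd
    have hn := hd.neg
    rw [neg_neg] at hn
    exact hn
  -- derivative of g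
  have hg' : ∀ y, x₀ ≤ y → HasDerivAt g ((W (l - 2) y / W (l - 1) y) ^ 2) y := by
    intro y hy
    have hay := hax y hy
    obtain ⟨h1, h2, h3⟩ := hnv y hy
    have hq : DifferentiableAt ℝ (fun z => W (l - 1) z / W (l - 1 - 2) z) y := by
      have e : l - 1 - 2 = l - 3 := by omega
      rw [e]
      exact (hdiffW (l - 1) y hay).div (hdiffW (l - 3) y hay) h3
    have hd := hq.hasDerivAt
    have e2 : l - 1 - 2 = l - 3 := by omega
    have e1 : l - 1 - 1 = l - 2 := by omega
    rw [hchain (l - 1) (by omega) y hay (by rw [e2]; exact h3)] at hd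
    rw [e1, e2] at hd
    have hne : W (l - 1) y / W (l - 3) y ≠ 0 := div_ne_zero h1 h3
    have hinv := hd.inv hne
    have hfun : (fun z => W (l - 1) z / W (l - 3) z)⁻¹ = g := by
      funext z; simp [hgdef, inv_div]
    rw [hfun] at hinv
    have heq : (W (l - 2) y / W (l - 1) y) ^ 2 =
        - -(W (l - 2) y / W (l - 3) y) ^ 2 / (W (l - 1) y / W (l - 3) y) ^ 2 := by
      rw [neg_neg, div_pow, div_pow, div_pow]
      field_simp
    rw [heq]
    exact hinv
  -- the product of the two derivatives is 1
  have hprod : ∀ y, x₀ ≤ y →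
      (W (l - 1) y / W (l - 2) y) ^ 2 * (W (l - 2) y / W (l - 1) y) ^ 2 = 1 := by
    intro y hy
    obtain ⟨h1, h2, h3⟩ := hnv y hy
    field_simp
  -- continuity
  have hfc : ContinuousOn f (Set.Ici x₀) := fun y hy =>
    ((hf' y hy).continuousAt).continuousWithinAt
  have hgc : ContinuousOn g (Set.Ici x₀) := fun y hy =>
    ((hg' y hy).continuousAt).continuousWithinAt
  -- strict monotonicity of f and g on [x₀, ∞)
  have hfmono : StrictMonoOn f (Set.Ici x₀) := by
    apply strictMonoOn_of_deriv_pos (convex_Ici x₀) hfc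
    intro y hy
    rw [interior_Ici] at hy
    rw [(hf' y hy.le).deriv]
    obtain ⟨h1, h2, h3⟩ := hnv y hy.le
    have : W (l - 1) y / W (l - 2) y ≠ 0 := div_ne_zero h1 h2
    positivity
  have hgmono : StrictMonoOn g (Set.Ici x₀) := by
    apply strictMonoOn_of_deriv_pos (convex_Ici x₀) hgc
    intro y hy
    rw [interior_Ici] at hy
    rw [(hg' y hy.le).deriv]
    obtain ⟨h1, h2, h3⟩ := hnv y hy.le
    have : W (l - 2) y / W (l - 1) y ≠ 0 := div_ne_zero h2 h1
    positivity
  -- define F, G, φ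
  set F : ℝ → ℝ := fun y => f y - f x₀ with hFdef
  set G : ℝ → ℝ := fun y => g y - g x₀ with hGdef
  set φ : ℝ → ℝ := fun y => Real.sqrt (F y) * Real.sqrt (G y) with hφdef
  have hFpos : ∀ y, x₀ < y → 0 < F y := by
    intro y hy
    exact sub_pos.mpr (hfmono Set.self_mem_Ici (le_of_lt hy) hy)
  have hGpos : ∀ y, x₀ < y → 0 < G y := by
    intro y hy
    exact sub_pos.mpr (hgmono Set.self_mem_Ici (le_of_lt hy) hy)
  -- φ is continuous on [x₀, x]
  have hφc : ContinuousOn φ (Set.Icc x₀ x) := by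
    have hFc : ContinuousOn F (Set.Icc x₀ x) :=
      ((hfc.mono Set.Icc_subset_Ici_self).sub continuousOn_const)
    have hGc : ContinuousOn G (Set.Icc x₀ x) :=
      ((hgc.mono Set.Icc_subset_Ici_self).sub continuousOn_const)
    exact (Real.continuous_sqrt.comp_continuousOn hFc).mul
      (Real.continuous_sqrt.comp_continuousOn hGc)
  -- derivative of φ is at least 1 on (x₀, x)
  have hφderiv : ∀ y ∈ Set.Ioo x₀ x, ∃ d : ℝ, HasDerivAt φ d y ∧ 1 ≤ d := by
    intro y hy
    obtain ⟨h1, h2, h3⟩ := hnv y hy.1.le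
    have hFy := hFpos y hy.1
    have hGy := hGpos y hy.1
    have hFd : HasDerivAt F ((W (l - 1) y / W (l - 2) y) ^ 2) y :=
      (hf' y hy.1.le).sub_const _
    have hGd : HasDerivAt G ((W (l - 2) y / W (l - 1) y) ^ 2) y :=
      (hg' y hy.1.le).sub_const _
    have hsF : HasDerivAt (fun z => Real.sqrt (F z))
        ((W (l - 1) y / W (l - 2) y) ^ 2 / (2 * Real.sqrt (F y))) y :=
      hFd.sqrt hFy.ne'
    have hsG : HasDerivAt (fun z => Real.sqrt (G z))
        ((W (l - 2) y / W (l - 1) y) ^ 2 / (2 * Real.sqrt (G y))) y :=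
      hGd.sqrt hGy.ne'
    refine ⟨_, hsF.mul hsG, ?_⟩
    set P := (W (l - 1) y / W (l - 2) y) ^ 2 with hP
    set Q := (W (l - 2) y / W (l - 1) y) ^ 2 with hQ
    set A := Real.sqrt (F y) with hA
    set B := Real.sqrt (G y) with hB
    have hApos : 0 < A := Real.sqrt_pos.mpr hFy
    have hBpos : 0 < B := Real.sqrt_pos.mpr hGy
    have hPQ : P * Q = 1 := hprod y hy.1.le
    have hPpos : 0 < P := by
      have : W (l - 1) y / W (l - 2) y ≠ 0 := div_ne_zero h1 h2
      positivity
    have hQpos : 0 < Q := by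
      have : W (l - 2) y / W (l - 1) y ≠ 0 := div_ne_zero h2 h1
      positivity
    set u := P / (2 * A) * B with hu
    set v := A * (Q / (2 * B)) with hv
    have hupos : 0 < u := by positivity
    have hvpos : 0 < v := by positivity
    have huv : u * v = 1 / 4 := by
      have hAB : A * B ≠ 0 := by positivity
      rw [hu, hv, show P / (2 * A) * B * (A * (Q / (2 * B))) = (P * Q) * (A * B) / (4 * (A * B)) by ring, hPQ]
      rw [one_mul, mul_comm (4:ℝ), ← div_div, div_self hAB]
    nlinarith [sq_nonneg (u - v), sq_nonneg (u + v - 1), hupos, hvpos]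
  -- comparison: φ y - y is monotone on [x₀, x]
  have hmono : MonotoneOn (fun y => φ y - y) (Set.Icc x₀ x) := by
    apply monotoneOn_of_deriv_nonneg (convex_Icc x₀ x)
      (hφc.sub continuousOn_id)
    · intro y hy
      rw [interior_Icc] at hy
      obtain ⟨d, hd, _⟩ := hφderiv y hy
      exact (hd.sub (hasDerivAt_id y)).differentiableAt.differentiableWithinAt
    · intro y hy
      rw [interior_Icc] at hy
      obtain ⟨d, hd, hd1⟩ := hφderiv y hy
      rw [(hd.sub (hasDerivAt_id y)).deriv]
      linarith
  have hφx₀ : φ x₀ = 0 := by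
    have : F x₀ = 0 := by simp [hFdef]
    simp [hφdef, this]
  have hstep : x - x₀ ≤ φ x := by
    have := hmono (Set.left_mem_Icc.mpr hx.le) (Set.right_mem_Icc.mpr hx.le) hx.le
    simp only [hφx₀] at this
    linarith
  have hxx : 0 ≤ x - x₀ := by linarith
  have hsq : (x - x₀) ^ 2 ≤ (φ x) ^ 2 := by
    apply pow_le_pow_left₀ hxx hstep
  have hφsq : (φ x) ^ 2 = F x * G x := by
    rw [hφdef]
    rw [mul_pow, Real.sq_sqrt (hFpos x hx).le, Real.sq_sqrt (hGpos x hx).le]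
  rw [hφsq] at hsq
  calc (x - x₀) ^ 2 ≤ F x * G x := hsq
    _ = (W l x₀ / W (l - 2) x₀ - W l x / W (l - 2) x) *
          (W (l - 3) x / W (l - 1) x - W (l - 3) x₀ / W (l - 1) x₀) := by
        simp only [hFdef, hGdef, hfdef, hgdef]
        ring
end
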